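/- arXiv:1601.07763 — 5 statements merged into one kernel-verified Lean document; each statement's English description precedes it below -/
import Mathlib

section
/- Let P : E' → E be a covering projection between path connected topological spaces. If E is a CW-complex, then E' is a CW-complex; moreover, the n-th skeleton of E' is the preimage under P of the n-th skeleton of E, and the restriction of P to each skeleton is again a covering projection. -/
open Topology Metric Set

universe u

/-- A (classical, Hatcher-style) CW-structure on a topological space `X`:
cells in each dimension with characteristic maps from closed Euclidean disks,
satisfying the usual axioms (open cells partition `X`, characteristic maps are
embeddings on open disks, boundaries attach to finitely many lower-dimensional cells,
and `X` carries the weak topology). -/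
structure CWStructure (X : Type u) [TopologicalSpace X] : Type (u + 1) where
  /-- index types of the `n`-cells -/
  cell : ℕ → Type u
  /-- characteristic maps defined on the closed unit disk of `ℝⁿ` -/
  map : ∀ n, cell n → EuclideanSpace ℝ (Fin n) → X
  continuousOn : ∀ n (i : cell n), ContinuousOn (map n i) (closedBall 0 1)
  isEmbedding_restrict : ∀ n (i : cell n),
    IsEmbedding ((ball (0 : EuclideanSpace ℝ (Fin n)) 1).restrict (map n i))
  pairwiseDisjoint : ∀ (c c' : Σ n, cell n), c ≠ c' →
    Disjoint (map c.1 c.2 '' ball 0 1) (map c'.1 c'.2 '' ball 0 1)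
  iUnion_cells : (⋃ (n : ℕ) (i : cell n), map n i '' ball 0 1) = univ
  boundary_subset : ∀ n (i : cell n),
    map n i '' sphere 0 1 ⊆ ⋃ (m : ℕ) (_ : m < n) (j : cell m), map m j '' ball 0 1
  closure_finite : ∀ n (i : cell n), ∃ S : Finset (Σ m, cell m),
    map n i '' sphere 0 1 ⊆ ⋃ c ∈ S, map c.1 c.2 '' ball 0 1
  weak_topology : ∀ A : Set X,
    IsClosed A ↔ ∀ n (i : cell n), IsClosed (map n i ⁻¹' A ∩ closedBall 0 1)
  t2 : T2Space X

namespace CWStructure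

variable {X : Type u} [TopologicalSpace X]

/-- The `n`-skeleton of a CW-structure: the union of all cells of dimension `≤ n`. -/
def skeleton (S : CWStructure X) (n : ℕ) : Set X :=
  ⋃ (m : ℕ) (_ : m ≤ n) (i : S.cell m), S.map m i '' closedBall 0 1

/-- The CW-structure `S` has dimension at most `d`. -/
def DimLE (S : CWStructure X) (d : ℕ) : Prop := ∀ n, d < n → IsEmpty (S.cell n)

end CWStructure

/-- `X` has the homotopy type of a CW-complex. -/
def HasCWHomotopyType (X : Type u) [TopologicalSpace X] : Prop :=
  ∃ (C : Type u) (_ : TopologicalSpace C),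
    Nonempty (CWStructure C) ∧ Nonempty (ContinuousMap.HomotopyEquiv X C)

/-- `X` has the homotopy type of a finite-dimensional CW-complex. -/
def HasFinDimCWHomotopyType (X : Type u) [TopologicalSpace X] : Prop :=
  ∃ (C : Type u) (_ : TopologicalSpace C) (S : CWStructure C) (d : ℕ),
    S.DimLE d ∧ Nonempty (ContinuousMap.HomotopyEquiv X C)

/-!
Each characteristic map `Φ` of `E` lifts along `P`: the closed disk is contractible and locally
path connected, so there is exactly one lift through each point of the fibre over `Φ 0`. These
lifts are the cells of `E'`. By uniqueness of lifts, the lifted open cells partition `E'` and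
attach to lifted lower cells. The weak topology is checked on the sheets of `P`, where a lift of
`Φ` agrees with `Φ` followed by the inverse of the sheet. Closure finiteness follows from
compactness of the disk: a compact subset of a sheet meets only finitely many lifts of a cell.
-/

section Lifting

variable {X Y V : Type*} [TopologicalSpace X] [TopologicalSpace Y] {p : X → Y}

theorem T2Space.of_isSeparatedMap [T2Space Y] (sep : IsSeparatedMap p) (hp : Continuous p) :
    T2Space X := by
  refine ⟨fun x y hne => ?_⟩
  by_cases h : p x = p y
  · exact sep x y h hne
  · obtain ⟨u, v, hu, hv, hxu, hyv, huv⟩ := t2_separation h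
    exact ⟨p ⁻¹' u, p ⁻¹' v, hu.preimage hp, hv.preimage hp, hxu, hyv, huv.preimage p⟩

theorem IsCoveringMap.exists_liftOn_of_convex [NormedAddCommGroup V] [NormedSpace ℝ V]
    (hp : IsCoveringMap p) {s : Set V} (hs : Convex ℝ s) {f : V → Y} (hf : ContinuousOn f s)
    {x₀ : V} (hx₀ : x₀ ∈ s) {e₀ : X} (he₀ : p e₀ = f x₀) :
    ∃ g : V → X, ContinuousOn g s ∧ (∀ x ∈ s, p (g x) = f x) ∧ g x₀ = e₀ := by
  classical
  have := hs.contractibleSpace ⟨x₀, hx₀⟩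
  have := hs.locallyPathConnectedSpace
  obtain ⟨F, ⟨hF₀, hF⟩, -⟩ := hp.existsUnique_continuousMap_lifts
    ⟨s.domRestrict f, continuousOn_iff_continuous_domRestrict.mp hf⟩ ⟨x₀, hx₀⟩ e₀ he₀
  refine ⟨fun x => if hx : x ∈ s then F ⟨x, hx⟩ else e₀, ?_, fun x hx => ?_, by simp [hx₀, hF₀]⟩
  · rw [continuousOn_iff_continuous_domRestrict]
    convert F.continuous using 1
    ext x
    simp [x.2]
  · simpa [hx] using congrFun hF ⟨x, hx⟩

theorem IsCoveringMap.eqOn_symm_comp [TopologicalSpace V] (hp : IsCoveringMap p)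
    {e : OpenPartialHomeomorph X Y} (he : p = e) {s : Set V} (hs : IsPreconnected s) {f : V → Y}
    (hf : ContinuousOn f s) (hfs : MapsTo f s e.target) {g : V → X} (hg : ContinuousOn g s)
    (hgf : ∀ x ∈ s, p (g x) = f x) {y : V} (hy : y ∈ s) (hgy : g y ∈ e.source) :
    EqOn g (e.symm ∘ f) s := by
  refine hp.eqOn_of_comp_eqOn hs hg (e.continuousOn_symm.comp hf hfs) (fun x hx => ?_) hy ?_
  · change p (g x) = p (e.symm (f x))
    rw [hgf x hx, he, e.right_inv (hfs hx)]
  · change g y = e.symm (f y)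
    rw [← hgf y hy, he, e.left_inv hgy]

end Lifting

namespace CWStructure

variable {E' E : Type u} [TopologicalSpace E'] [TopologicalSpace E] {P : E' → E}
  (S : CWStructure E) (hP : IsCoveringMap P)

theorem sigma_eq_of_map_eq {c c' : Σ n, S.cell n} {x : EuclideanSpace ℝ (Fin c.1)}
    {y : EuclideanSpace ℝ (Fin c'.1)} (hx : x ∈ ball 0 1) (hy : y ∈ ball 0 1)
    (h : S.map c.1 c.2 x = S.map c'.1 c'.2 y) : c = c' := by
  by_contra hne
  exact disjoint_left.1 (S.pairwiseDisjoint c c' hne) ⟨x, hx, h⟩ ⟨y, hy, rfl⟩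

def liftCell (P : E' → E) (n : ℕ) : Type u := Σ i : S.cell n, P ⁻¹' {S.map n i 0}

noncomputable def liftMap (n : ℕ) (c : S.liftCell P n) : EuclideanSpace ℝ (Fin n) → E' :=
  (hP.exists_liftOn_of_convex (convex_closedBall 0 1) (S.continuousOn n c.1)
    (mem_closedBall_self zero_le_one) c.2.2).choose

variable {S} {n : ℕ}

theorem liftMap_spec (c : S.liftCell P n) :
    ContinuousOn (S.liftMap hP n c) (closedBall 0 1) ∧
      (∀ x ∈ closedBall 0 1, P (S.liftMap hP n c x) = S.map n c.1 x) ∧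
      S.liftMap hP n c 0 = c.2 :=
  (hP.exists_liftOn_of_convex (convex_closedBall 0 1) (S.continuousOn n c.1)
    (mem_closedBall_self zero_le_one) c.2.2).choose_spec

theorem continuousOn_liftMap (c : S.liftCell P n) :
    ContinuousOn (S.liftMap hP n c) (closedBall 0 1) :=
  (liftMap_spec hP c).1

theorem liftMap_lifts (c : S.liftCell P n) {x : EuclideanSpace ℝ (Fin n)}
    (hx : x ∈ closedBall 0 1) : P (S.liftMap hP n c x) = S.map n c.1 x :=
  (liftMap_spec hP c).2.1 x hx

theorem liftMap_zero (c : S.liftCell P n) : S.liftMap hP n c 0 = c.2 :=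
  (liftMap_spec hP c).2.2

theorem eqOn_liftMap (c : S.liftCell P n) {g : EuclideanSpace ℝ (Fin n) → E'}
    (hg : ContinuousOn g (closedBall 0 1)) (hgP : ∀ x ∈ closedBall 0 1, P (g x) = S.map n c.1 x)
    {y : EuclideanSpace ℝ (Fin n)} (hy : y ∈ closedBall 0 1) (h : g y = S.liftMap hP n c y) :
    EqOn g (S.liftMap hP n c) (closedBall 0 1) :=
  hP.eqOn_of_comp_eqOn (convex_closedBall 0 1).isPreconnected hg (continuousOn_liftMap hP c)
    (fun x hx => by simp only [Function.comp_apply, hgP x hx, liftMap_lifts hP c hx]) hy h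

theorem eq_of_liftMap_eq {i : S.cell n} {a b : P ⁻¹' {S.map n i 0}}
    {x : EuclideanSpace ℝ (Fin n)} (hx : x ∈ closedBall 0 1)
    (h : S.liftMap hP n ⟨i, a⟩ x = S.liftMap hP n ⟨i, b⟩ x) : a = b := by
  have h₀ := eqOn_liftMap hP ⟨i, b⟩ (continuousOn_liftMap hP ⟨i, a⟩)
    (fun y hy => liftMap_lifts hP _ hy) hx h (mem_closedBall_self zero_le_one)
  exact Subtype.ext ((liftMap_zero hP ⟨i, a⟩).symm.trans (h₀.trans (liftMap_zero hP ⟨i, b⟩)))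

theorem exists_liftMap_eq {i : S.cell n} {x : EuclideanSpace ℝ (Fin n)}
    (hx : x ∈ closedBall 0 1) {z : E'} (hz : P z = S.map n i x) :
    ∃ a : P ⁻¹' {S.map n i 0}, S.liftMap hP n ⟨i, a⟩ x = z := by
  obtain ⟨g, hg, hgP, rfl⟩ :=
    hP.exists_liftOn_of_convex (convex_closedBall 0 1) (S.continuousOn n i) hx hz
  have h₀ := mem_closedBall_self (x := (0 : EuclideanSpace ℝ (Fin n))) zero_le_one
  let a : P ⁻¹' {S.map n i 0} := ⟨g 0, hgP 0 h₀⟩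
  exact ⟨a, (eqOn_liftMap hP ⟨i, a⟩ hg hgP h₀ (liftMap_zero hP ⟨i, a⟩).symm hx).symm⟩

theorem exists_mem_image_liftMap {i : S.cell n} {s : Set (EuclideanSpace ℝ (Fin n))}
    (hs : s ⊆ closedBall 0 1) {z : E'} (hz : P z ∈ S.map n i '' s) :
    ∃ a : P ⁻¹' {S.map n i 0}, z ∈ S.liftMap hP n ⟨i, a⟩ '' s := by
  obtain ⟨x, hx, hxz⟩ := hz
  obtain ⟨a, ha⟩ := exists_liftMap_eq hP (hs hx) hxz.symm
  exact ⟨a, x, hx, ha⟩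

variable (S)

theorem isEmbedding_liftMap (c : S.liftCell P n) :
    IsEmbedding ((ball (0 : EuclideanSpace ℝ (Fin n)) 1).domRestrict (S.liftMap hP n c)) := by
  refine .of_comp (continuousOn_iff_continuous_domRestrict.mp
    ((continuousOn_liftMap hP c).mono ball_subset_closedBall)) hP.continuous ?_
  convert S.isEmbedding_restrict n c.1 using 1
  ext x
  exact liftMap_lifts hP c (ball_subset_closedBall x.2)

theorem pairwiseDisjoint_liftMap (c c' : Σ n, S.liftCell P n) (hne : c ≠ c') :
    Disjoint (S.liftMap hP c.1 c.2 '' ball 0 1) (S.liftMap hP c'.1 c'.2 '' ball 0 1) := by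
  obtain ⟨n, i, a⟩ := c
  obtain ⟨n', i', b⟩ := c'
  refine disjoint_left.2 ?_
  rintro _ ⟨x, hx, rfl⟩ ⟨y, hy, hyx⟩
  dsimp only at x hx y hy hyx
  have hΦ : S.map n' i' y = S.map n i x := by
    rw [← liftMap_lifts hP ⟨i', b⟩ (ball_subset_closedBall hy), hyx,
      liftMap_lifts hP ⟨i, a⟩ (ball_subset_closedBall hx)]
  cases S.sigma_eq_of_map_eq (c := ⟨n', i'⟩) (c' := ⟨n, i⟩) hy hx hΦ
  obtain rfl : y = x :=
    congrArg Subtype.val ((S.isEmbedding_restrict n i).injective (a₁ := ⟨y, hy⟩) (a₂ := ⟨x, hx⟩) hΦ)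
  obtain rfl := eq_of_liftMap_eq hP (ball_subset_closedBall hx) hyx
  exact hne rfl

theorem iUnion_liftMap :
    (⋃ (n : ℕ) (c : S.liftCell P n), S.liftMap hP n c '' ball 0 1) = univ := by
  refine eq_univ_of_forall fun z => ?_
  have hz : P z ∈ ⋃ (n : ℕ) (i : S.cell n), S.map n i '' ball 0 1 := S.iUnion_cells ▸ mem_univ _
  simp only [mem_iUnion] at hz ⊢
  obtain ⟨n, i, hz⟩ := hz
  obtain ⟨a, ha⟩ := exists_mem_image_liftMap hP ball_subset_closedBall hz
  exact ⟨n, ⟨i, a⟩, ha⟩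

theorem liftMap_sphere_subset (c : S.liftCell P n) :
    S.liftMap hP n c '' sphere 0 1 ⊆
      ⋃ (m : ℕ) (_ : m < n) (d : S.liftCell P m), S.liftMap hP m d '' ball 0 1 := by
  rintro _ ⟨x, hx, rfl⟩
  have hz := S.boundary_subset n c.1
    ⟨x, hx, (liftMap_lifts hP c (sphere_subset_closedBall hx)).symm⟩
  simp only [mem_iUnion] at hz ⊢
  obtain ⟨m, hm, j, hz⟩ := hz
  obtain ⟨a, ha⟩ := exists_mem_image_liftMap hP ball_subset_closedBall hz
  exact ⟨m, hm, ⟨j, a⟩, ha⟩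

theorem isClosed_compl_target_union_preimage_symm {A : Set E'}
    (hA : ∀ n (c : S.liftCell P n), IsClosed (S.liftMap hP n c ⁻¹' A ∩ closedBall 0 1))
    {e : OpenPartialHomeomorph E' E} (he : P = e) : IsClosed (e.targetᶜ ∪ e.symm ⁻¹' A) := by
  rw [S.weak_topology]
  intro n i
  refine isClosed_of_closure_subset fun x hx => ?_
  have hxD : x ∈ closedBall 0 1 := closure_minimal inter_subset_right isClosed_closedBall hx
  refine ⟨?_, hxD⟩
  by_contra hxZ
  simp only [mem_preimage, mem_union, mem_compl_iff, not_or, not_not] at hxZ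
  obtain ⟨a, ha⟩ := exists_liftMap_eq hP hxD
    (show P (e.symm (S.map n i x)) = S.map n i x by rw [he, e.right_inv hxZ.1])
  obtain ⟨ε, hε, hεe⟩ := Metric.mem_nhdsWithin_iff.1
    (S.continuousOn n i x hxD (e.open_target.mem_nhds hxZ.1))
  have hxN : x ∈ ball x ε ∩ closedBall 0 1 := ⟨mem_ball_self hε, hxD⟩
  have hgN : EqOn (S.liftMap hP n ⟨i, a⟩) (e.symm ∘ S.map n i) (ball x ε ∩ closedBall 0 1) :=
    hP.eqOn_symm_comp he ((convex_ball x ε).inter (convex_closedBall 0 1)).isPreconnected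
    ((S.continuousOn n i).mono inter_subset_right) hεe
    ((continuousOn_liftMap hP ⟨i, a⟩).mono inter_subset_right)
    (fun y hy => liftMap_lifts hP _ hy.2) hxN (by rw [ha]; exact e.map_target hxZ.1)
  have hsub : ball x ε ∩ (S.map n i ⁻¹' (e.targetᶜ ∪ e.symm ⁻¹' A) ∩ closedBall 0 1) ⊆
      S.liftMap hP n ⟨i, a⟩ ⁻¹' A ∩ closedBall 0 1 := by
    rintro y ⟨hyx, hyZ | hyZ, hyD⟩
    · exact absurd (hεe ⟨hyx, hyD⟩) hyZ
    · exact ⟨by rw [mem_preimage, hgN ⟨hyx, hyD⟩]; exact hyZ, hyD⟩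
  have := closure_mono hsub (isOpen_ball.inter_closure ⟨mem_ball_self hε, hx⟩)
  rw [(hA n ⟨i, a⟩).closure_eq] at this
  exact hxZ.2 (ha ▸ this.1)

theorem isClosed_iff_liftMap (A : Set E') :
    IsClosed A ↔ ∀ n (c : S.liftCell P n), IsClosed (S.liftMap hP n c ⁻¹' A ∩ closedBall 0 1) := by
  refine ⟨fun hA n c => ?_, fun h => isClosed_of_closure_subset fun w hw => ?_⟩
  · rw [inter_comm]
    exact (continuousOn_liftMap hP c).preimage_isClosed_of_isClosed isClosed_closedBall hA
  obtain ⟨e, hwe, he⟩ := hP.isLocalHomeomorph w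
  have hsub : e.source ∩ A ⊆ P ⁻¹' (e.targetᶜ ∪ e.symm ⁻¹' A) := fun v hv =>
    Or.inr (by rw [mem_preimage, he, e.left_inv hv.1]; exact hv.2)
  rcases closure_minimal hsub ((S.isClosed_compl_target_union_preimage_symm hP h he).preimage
    hP.continuous) (e.open_source.inter_closure ⟨hwe, hw⟩) with hw' | hw'
  · exact absurd (he ▸ e.map_source hwe) hw'
  · rwa [mem_preimage, he, e.left_inv hwe] at hw'

theorem finite_setOf_liftMap_mem {e : OpenPartialHomeomorph E' E} (he : P = e) {L : Set E'}
    (hL : IsCompact L) (hLe : L ⊆ e.source) (i : S.cell n) :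
    {a : P ⁻¹' {S.map n i 0} | ∃ y ∈ closedBall 0 1, S.liftMap hP n ⟨i, a⟩ y ∈ L}.Finite := by
  have := S.t2
  set C := closedBall 0 1 ∩ S.map n i ⁻¹' (P '' L)
  have hC : IsCompact C := (isCompact_closedBall 0 1).of_isClosed_subset
    ((S.continuousOn n i).preimage_isClosed_of_isClosed isClosed_closedBall
      (hL.image hP.continuous).isClosed) inter_subset_left
  have hCe : ∀ x ∈ C, ∃ ε > 0, MapsTo (S.map n i) (ball x ε ∩ closedBall 0 1) e.target := by
    rintro x ⟨hxD, w, hw, hwx⟩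
    refine Metric.mem_nhdsWithin_iff.1 (S.continuousOn n i x hxD (e.open_target.mem_nhds ?_))
    rw [← hwx, he]
    exact e.map_source (hLe hw)
  choose! ε hε hεe using hCe
  obtain ⟨t, htC, hCt⟩ := hC.elim_nhds_subcover (fun x => ball x (ε x))
    fun x hx => ball_mem_nhds x (hε x hx)
  -- a lift meeting `L` over `ball x (ε x)` passes through `e.symm (S.map n i x)`
  refine Set.Finite.subset (s := ⋃ x ∈ t,
      {a : P ⁻¹' {S.map n i 0} | S.liftMap hP n ⟨i, a⟩ x = e.symm (S.map n i x)})
    (t.finite_toSet.biUnion fun x hx => Set.Subsingleton.finite fun a ha b hb =>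
      eq_of_liftMap_eq hP (htC x hx).1 (ha.trans hb.symm)) ?_
  rintro a ⟨y, hyD, hyL⟩
  have hyC : y ∈ C := ⟨hyD, _, hyL, liftMap_lifts hP _ hyD⟩
  obtain ⟨x, hxt, hyx⟩ := mem_iUnion₂.1 (hCt hyC)
  refine mem_iUnion₂.2 ⟨x, hxt, ?_⟩
  have hxC := htC x hxt
  exact hP.eqOn_symm_comp he ((convex_ball x (ε x)).inter (convex_closedBall 0 1)).isPreconnected
    ((S.continuousOn n i).mono inter_subset_right) (hεe x hxC)
    ((continuousOn_liftMap hP _).mono inter_subset_right) (fun z hz => liftMap_lifts hP _ hz.2)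
    ⟨hyx, hyD⟩ (hLe hyL) ⟨mem_ball_self (hε x hxC), hxC.1⟩

theorem closure_finite_liftMap (c : S.liftCell P n) :
    ∃ T : Finset (Σ m, S.liftCell P m),
      S.liftMap hP n c '' sphere 0 1 ⊆ ⋃ d ∈ T, S.liftMap hP d.1 d.2 '' ball 0 1 := by
  classical
  have := S.t2
  have : T2Space E' := .of_isSeparatedMap hP.isSeparatedMap hP.continuous
  set K := S.liftMap hP n c '' sphere 0 1
  have hK : IsCompact K := (isCompact_sphere 0 1).image_of_continuousOn
    ((continuousOn_liftMap hP c).mono sphere_subset_closedBall)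
  obtain ⟨S₀, hS₀⟩ := S.closure_finite n c.1
  choose e hze he using (hP.isLocalHomeomorph :
    ∀ z, ∃ e : OpenPartialHomeomorph E' E, z ∈ e.source ∧ P = e)
  obtain ⟨t, ht⟩ := hK.elim_finite_subcover (fun z => (e z).source) (fun z => (e z).open_source)
    fun z _ => mem_iUnion.2 ⟨z, hze z⟩
  obtain ⟨L, hL, hLe, hKL⟩ :=
    hK.finite_compact_cover t (fun z => (e z).source) (fun z _ => (e z).open_source) ht
  set T : Set (Σ m, S.liftCell P m) := ⋃ d ∈ S₀, ⋃ z ∈ t, (fun a => ⟨d.1, d.2, a⟩) ''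
    {a | ∃ y ∈ closedBall 0 1, S.liftMap hP d.1 ⟨d.2, a⟩ y ∈ L z}
  have hT : T.Finite := S₀.finite_toSet.biUnion fun d _ => t.finite_toSet.biUnion fun z _ =>
    (S.finite_setOf_liftMap_mem hP (he z) (hL z) (hLe z) d.2).image _
  refine ⟨hT.toFinset, fun k hk => ?_⟩
  obtain ⟨z, hzt, hkz⟩ := mem_iUnion₂.1 (hKL ▸ hk)
  have hPk : P k ∈ S.map n c.1 '' sphere 0 1 := by
    obtain ⟨y, hy, rfl⟩ := hk
    exact ⟨y, hy, (liftMap_lifts hP c (sphere_subset_closedBall hy)).symm⟩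
  obtain ⟨m, ⟨i, a⟩, x, hx, rfl⟩ : ∃ m, ∃ d : S.liftCell P m, k ∈ S.liftMap hP m d '' ball 0 1 := by
    simpa using (S.iUnion_liftMap hP).ge (mem_univ k)
  obtain ⟨d, hd, y, hy, hyx⟩ : ∃ d ∈ S₀, ∃ y ∈ ball 0 1, S.map d.1 d.2 y = S.map m i x := by
    simpa [liftMap_lifts hP ⟨i, a⟩ (ball_subset_closedBall hx)] using hS₀ hPk
  obtain rfl := S.sigma_eq_of_map_eq (c' := ⟨m, i⟩) hy hx hyx
  refine mem_iUnion₂.2 ⟨⟨m, i, a⟩, ?_, x, hx, rfl⟩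
  rw [Set.Finite.mem_toFinset]
  exact mem_iUnion₂.2 ⟨_, hd, mem_iUnion₂.2 ⟨z, hzt, a, ⟨x, ball_subset_closedBall hx, hkz⟩, rfl⟩⟩

noncomputable def lift : CWStructure E' where
  cell := S.liftCell P
  map := S.liftMap hP
  continuousOn _ := continuousOn_liftMap hP
  isEmbedding_restrict _ := S.isEmbedding_liftMap hP
  pairwiseDisjoint := S.pairwiseDisjoint_liftMap hP
  iUnion_cells := S.iUnion_liftMap hP
  boundary_subset _ := S.liftMap_sphere_subset hP
  closure_finite _ := S.closure_finite_liftMap hP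
  weak_topology := S.isClosed_iff_liftMap hP
  t2 := by
    have := S.t2
    exact .of_isSeparatedMap hP.isSeparatedMap hP.continuous

theorem skeleton_lift (n : ℕ) : (S.lift hP).skeleton n = P ⁻¹' S.skeleton n := by
  ext z
  simp only [skeleton, mem_iUnion, mem_preimage]
  constructor
  · rintro ⟨m, hm, c, x, hx, rfl⟩
    exact ⟨m, hm, c.1, x, hx, (liftMap_lifts hP c hx).symm⟩
  · rintro ⟨m, hm, i, hz⟩
    obtain ⟨a, ha⟩ := exists_mem_image_liftMap hP subset_rfl hz
    exact ⟨m, hm, ⟨i, a⟩, ha⟩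

end CWStructure

theorem coveringMap_lifts_cwStructure_general
    {E' E : Type u} [TopologicalSpace E'] [TopologicalSpace E]
    (P : E' → E) (hP : IsCoveringMap P) (S : CWStructure E) :
    ∃ S' : CWStructure E', ∀ n : ℕ,
      S'.skeleton n = P ⁻¹' (S.skeleton n) ∧
      ∃ h : Set.MapsTo P (S'.skeleton n) (S.skeleton n),
        IsCoveringMap (h.restrict P (S'.skeleton n) (S.skeleton n)) := by
  refine ⟨S.lift hP, fun n => ⟨S.skeleton_lift hP n, ?_⟩⟩
  rw [S.skeleton_lift hP n]
  exact ⟨fun _ hx => hx, hP.restrictPreimage (S.skeleton n)⟩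

/-- **Proposition (lifting CW-structures along coverings).**
Let `P : E' → E` be a covering projection between path connected spaces.  If `E` is a
CW-complex, then `E'` carries a CW-structure whose `n`-skeleton is the preimage under `P`
of the `n`-skeleton of `E`, and the restriction of `P` to each skeleton is again a
covering projection. -/
theorem coveringMap_lifts_cwStructure
    {E' E : Type u} [TopologicalSpace E'] [TopologicalSpace E]
    [PathConnectedSpace E'] [PathConnectedSpace E]
    (P : E' → E) (hP : IsCoveringMap P) (S : CWStructure E) :
    ∃ S' : CWStructure E', ∀ n : ℕ,
      S'.skeleton n = P ⁻¹' (S.skeleton n) ∧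
      ∃ h : Set.MapsTo P (S'.skeleton n) (S.skeleton n),
        IsCoveringMap (h.restrict P (S'.skeleton n) (S.skeleton n)) :=
  coveringMap_lifts_cwStructure_general P hP S
end

section
/- Let P : E' → E be a covering projection between path connected topological spaces. If E is a regular T₁ space with finite small inductive dimension ind(E) ≤ n, then E' is a regular T₁ space with small inductive dimension ind(E') ≤ n. -/
universe u

/-- `IndLE (n + 1) X inst` says that the small inductive dimension of `X` is at most `n`;
`IndLE 0 X inst` says that the small inductive dimension of `X` is `-1`, i.e. `X = ∅`:
every point has arbitrarily small open neighbourhoods whose topological boundary has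
small inductive dimension at most `n - 1`. -/
def IndLE : ℕ → ∀ (X : Type u), TopologicalSpace X → Prop
  | 0, X, _ => IsEmpty X
  | n + 1, X, inst =>
      letI := inst
      ∀ (x : X) (U : Set X), IsOpen U → x ∈ U →
        ∃ V : Set X, IsOpen V ∧ x ∈ V ∧ V ⊆ U ∧ IndLE n ↥(frontier V) inferInstance

/-!
Every point of `E'` lies in a sheet `S` of the covering: an open set on which `P` is injective,
and such that `S ∩ P ⁻¹' C` is closed in `E'` for every closed `C ⊆ P '' S`. Using regularity of
`E`, closed neighbourhoods and neighbourhoods `W` with small-dimensional frontier can be chosen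
with closure inside `P '' S`; their lifts `S ∩ P ⁻¹' W` are then neighbourhoods of the same kind,
since `P` embeds the frontier of `S ∩ P ⁻¹' W` into the frontier of `W`.
-/

open Topology Set Filter

theorem Topology.IsEmbedding.indLE {X Y : Type u} [tX : TopologicalSpace X]
    [tY : TopologicalSpace Y] {f : X → Y} (hf : IsEmbedding f) (n : ℕ)
    (h : IndLE n Y tY) : IndLE n X tX := by
  induction n generalizing X Y with
  | zero => exact ⟨fun x => h.elim (f x)⟩
  | succ n ih =>
    intro x U hU hxU
    obtain ⟨U', hU', rfl⟩ := hf.isInducing.isOpen_iff.mp hU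
    obtain ⟨V', hV', hxV', hV'U', hfrV'⟩ := h (f x) U' hU' hxU
    have hfr : frontier (f ⁻¹' V') ⊆ f ⁻¹' frontier V' :=
      hf.continuous.frontier_preimage_subset V'
    refine ⟨f ⁻¹' V', hV'.preimage hf.continuous, hxV', preimage_mono hV'U', ?_⟩
    exact ih ((hf.comp .subtypeVal).codRestrict _ fun y => hfr y.2) hfrV'

section Sheet

variable {E' E : Type*} [TopologicalSpace E'] [TopologicalSpace E] {P : E' → E} {S : Set E'}

structure IsSheet (P : E' → E) (S : Set E') : Prop where
  isOpen : IsOpen S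
  injOn : InjOn P S
  isClosed_inter_preimage : ∀ C, IsClosed C → C ⊆ P '' S → IsClosed (S ∩ P ⁻¹' C)

theorem IsSheet.inter (hS : IsSheet P S) {U : Set E'} (hU : IsOpen U) : IsSheet P (S ∩ U) where
  isOpen := hS.isOpen.inter hU
  injOn := hS.injOn.mono inter_subset_left
  isClosed_inter_preimage C hC hCS := by
    convert hS.isClosed_inter_preimage C hC
      (hCS.trans (image_mono inter_subset_left)) using 1
    refine (inter_subset_inter_left _ inter_subset_left).antisymm fun y ⟨hyS, hyC⟩ => ?_
    obtain ⟨z, ⟨hzS, hzU⟩, hzy⟩ := hCS hyC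
    obtain rfl : z = y := hS.injOn hzS hyS hzy
    exact ⟨⟨hyS, hzU⟩, hyC⟩

theorem IsSheet.isEmbedding_domRestrict (hS : IsSheet P S) (hPc : Continuous P)
    (hPo : IsOpenMap P) {A : Set E'} (hAS : A ⊆ S) : IsEmbedding (A.domRestrict P) :=
  have hSP : IsOpenEmbedding (S.domRestrict P) :=
    .of_continuous_injective_isOpenMap (hPc.comp continuous_subtype_val)
      hS.injOn.injective (hPo.domRestrict hS.isOpen)
  hSP.isEmbedding.comp (IsEmbedding.inclusion hAS)

theorem IsSheet.frontier_inter_preimage_subset (hS : IsSheet P S) (hPc : Continuous P)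
    {W : Set E} (hW : IsOpen W) (hWS : closure W ⊆ P '' S) :
    frontier (S ∩ P ⁻¹' W) ⊆ S ∩ P ⁻¹' frontier W := by
  have hclosure : closure (S ∩ P ⁻¹' W) ⊆ S ∩ P ⁻¹' closure W :=
    closure_minimal (inter_subset_inter_right _ (preimage_mono subset_closure))
      (hS.isClosed_inter_preimage _ isClosed_closure hWS)
  rw [(hS.isOpen.inter (hW.preimage hPc)).frontier_eq, hW.frontier_eq]
  rintro y ⟨hy, hyV⟩
  obtain ⟨hyS, hyW⟩ := hclosure hy
  exact ⟨hyS, hyW, fun hyW' => hyV ⟨hyS, hyW'⟩⟩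

end Sheet

namespace IsCoveringMap

variable {E' E : Type*} [TopologicalSpace E'] [TopologicalSpace E] {P : E' → E}

theorem exists_isSheet (hP : IsCoveringMap P) (x : E') : ∃ S, x ∈ S ∧ IsSheet P S := by
  have : Nonempty (P ⁻¹' {P x}) := ⟨⟨x, rfl⟩⟩
  have := (hP (P x)).discreteTopology_fiber
  set t := (hP (P x)).toTrivialization
  have hxt : x ∈ t.source := t.mem_source.mpr (hP (P x)).mem_toTrivialization_baseSet
  have isOpen_fiber {F : Set (P ⁻¹' {P x})} : IsOpen (t.source ∩ t ⁻¹' (univ ×ˢ F)) :=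
    t.continuousOn_toFun.isOpen_inter_preimage t.open_source (isOpen_univ.prod (isOpen_discrete F))
  refine ⟨t.source ∩ t ⁻¹' (univ ×ˢ {(t x).2}), ⟨hxt, trivial, rfl⟩, isOpen_fiber, ?_, ?_⟩
  · rintro a ⟨ha, -, hax⟩ b ⟨hb, -, hbx⟩ hab
    exact t.injOn ha hb <| Prod.ext ((t.coe_fst ha).trans (hab.trans (t.coe_fst hb).symm))
      (hax.trans hbx.symm)
  · intro C hC hCS
    have hCt : C ⊆ t.baseSet := hCS.trans (image_subset_iff.mpr fun y hy => t.mem_source.mp hy.1)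
    rw [← isOpen_compl_iff]
    convert (hC.isOpen_compl.preimage hP.continuous).union
      (isOpen_fiber (F := {(t x).2}ᶜ)) using 1
    ext y
    by_cases hyC : P y ∈ C
    · have hy : y ∈ t.source := t.mem_source.mpr (hCt hyC)
      simp [hyC, hy]
    · simp [hyC]

theorem exists_isSheet_subset (hP : IsCoveringMap P) {x : E'} {U : Set E'} (hU : U ∈ 𝓝 x) :
    ∃ S ⊆ U, x ∈ S ∧ IsSheet P S := by
  obtain ⟨S, hxS, hS⟩ := hP.exists_isSheet x
  exact ⟨S ∩ interior U, inter_subset_right.trans interior_subset,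
    ⟨hxS, mem_interior_iff_mem_nhds.mpr hU⟩, hS.inter isOpen_interior⟩

theorem t1Space [T1Space E] (hP : IsCoveringMap P) : T1Space E' where
  t1 x := by
    obtain ⟨S, hxS, hS⟩ := hP.exists_isSheet x
    have hx : {x} = S ∩ P ⁻¹' {P x} :=
      (subset_inter (singleton_subset_iff.mpr hxS) fun _ h => congrArg P h).antisymm
        fun y ⟨hyS, hy⟩ => hS.injOn hyS hxS hy
    rw [hx]
    exact hS.isClosed_inter_preimage _ isClosed_singleton
      (singleton_subset_iff.mpr (mem_image_of_mem P hxS))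

theorem exists_isSheet_closed_nhds [RegularSpace E] (hP : IsCoveringMap P) {x : E'}
    {U : Set E'} (hU : U ∈ 𝓝 x) :
    ∃ S ⊆ U, x ∈ S ∧ IsSheet P S ∧ ∃ D ∈ 𝓝 (P x), IsClosed D ∧ D ⊆ P '' S := by
  obtain ⟨S, hSU, hxS, hS⟩ := hP.exists_isSheet_subset hU
  exact ⟨S, hSU, hxS, hS, exists_mem_nhds_isClosed_subset
    ((hP.isOpenMap S hS.isOpen).mem_nhds (mem_image_of_mem P hxS))⟩

theorem regularSpace [RegularSpace E] (hP : IsCoveringMap P) : RegularSpace E' := by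
  refine .of_exists_mem_nhds_isClosed_subset fun x U hU => ?_
  obtain ⟨S, hSU, hxS, hS, D, hD, hDc, hDS⟩ := hP.exists_isSheet_closed_nhds hU
  exact ⟨S ∩ P ⁻¹' D, inter_mem (hS.isOpen.mem_nhds hxS) (hP.continuous.continuousAt hD),
    hS.isClosed_inter_preimage D hDc hDS, inter_subset_left.trans hSU⟩

theorem indLE {E' E : Type u} [tE' : TopologicalSpace E'] [tE : TopologicalSpace E]
    [RegularSpace E] {P : E' → E} (hP : IsCoveringMap P) {n : ℕ} (hE : IndLE (n + 1) E tE) :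
    IndLE (n + 1) E' tE' := by
  intro x U hU hxU
  obtain ⟨S, hSU, hxS, hS, D, hD, hDc, hDS⟩ := hP.exists_isSheet_closed_nhds (hU.mem_nhds hxU)
  obtain ⟨W, hW, hxW, hWD, hfrW⟩ :=
    hE (P x) (interior D) isOpen_interior (mem_interior_iff_mem_nhds.mpr hD)
  have hWS : closure W ⊆ P '' S :=
    (closure_minimal (hWD.trans interior_subset) hDc).trans hDS
  have hfr := hS.frontier_inter_preimage_subset hP.continuous hW hWS
  refine ⟨S ∩ P ⁻¹' W, hS.isOpen.inter (hW.preimage hP.continuous), ⟨hxS, hxW⟩,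
    inter_subset_left.trans hSU, ?_⟩
  have hemb := (hS.isEmbedding_domRestrict hP.continuous hP.isOpenMap
    (hfr.trans inter_subset_left)).codRestrict _ fun y => (hfr y.2).2
  exact hemb.indLE n hfrW

end IsCoveringMap

theorem coveringMap_lifts_regular_and_ind_general
    {E' E : Type u} [tE' : TopologicalSpace E'] [tE : TopologicalSpace E]
    (P : E' → E) (hP : IsCoveringMap P)
    [RegularSpace E] [T1Space E] (n : ℕ) (hE : IndLE (n + 1) E tE) :
    RegularSpace E' ∧ T1Space E' ∧ IndLE (n + 1) E' tE' :=
  ⟨hP.regularSpace, hP.t1Space, hP.indLE hE⟩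

/-- **Proposition 5(c).**
Let `P : E' → E` be a covering projection between path connected spaces.  If `E` is a
regular `T₁` space with small inductive dimension `ind(E) ≤ n`, then `E'` is a regular `T₁`
space with `ind(E') ≤ n`. -/
theorem coveringMap_lifts_regular_and_ind
    {E' E : Type u} [tE' : TopologicalSpace E'] [tE : TopologicalSpace E]
    [PathConnectedSpace E'] [PathConnectedSpace E]
    (P : E' → E) (hP : IsCoveringMap P)
    [RegularSpace E] [T1Space E] (n : ℕ) (hE : IndLE (n + 1) E tE) :
    RegularSpace E' ∧ T1Space E' ∧ IndLE (n + 1) E' tE' :=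
  coveringMap_lifts_regular_and_ind_general (tE' := tE') (tE := tE) P hP n hE
end

section
/- Let P : E' → E be a covering projection between path connected topological spaces. If E is locally path connected and second countable, then E' is locally path connected and second countable. -/
/-!
Charts of the local homeomorphism `P` make `E'` locally path connected. For second countability,
cover `E` by countably many evenly covered open sets `U`; the path components of `P ⁻¹' U`
(sheets) are open, and `P` embeds each of them into `E`, so each is second countable. Starting
from one point and repeatedly adding countable dense subsets of the sheets through the points
already chosen gives a countable set whose closure is open, hence all of `E'` by connectedness.
Every sheet then passes through a point of this countable dense set, so countably many sheets
cover `E'`.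
-/

universe u

open Set Topology TopologicalSpace

theorem LocallyPathConnectedSpace.of_exists_mem_nhds {X : Type*}
    [TopologicalSpace X] (h : ∀ x : X, ∃ U ∈ 𝓝 x, LocallyPathConnectedSpace U) :
    LocallyPathConnectedSpace X where
  path_connected_basis x := by
    obtain ⟨U, hU, _⟩ := h x
    rw [Filter.hasBasis_self]
    intro t ht
    have hxU : x ∈ U := mem_of_mem_nhds hU
    rw [← map_nhds_subtype_coe_eq_nhds hxU hU] at ht ⊢
    obtain ⟨s, ⟨hs, hsc⟩, hst⟩ := (path_connected_basis (⟨x, hxU⟩ : U)).mem_iff.mp ht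
    refine ⟨(↑) '' s, Filter.image_mem_map hs, hsc.image continuous_subtype_val, ?_⟩
    rintro _ ⟨y, hy, rfl⟩
    exact hst hy

theorem IsLocalHomeomorph.locallyPathConnectedSpace {X Y : Type*} [TopologicalSpace X]
    [TopologicalSpace Y] [LocallyPathConnectedSpace Y] {f : X → Y} (hf : IsLocalHomeomorph f) :
    LocallyPathConnectedSpace X :=
  .of_exists_mem_nhds fun x ↦
    let ⟨U, hU, hemb⟩ := isLocalHomeomorph_iff_isOpenEmbedding_restrict.mp hf x
    ⟨U, hU, hemb.locallyPathConnectedSpace⟩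

section Sheets

-- `V i a` is the piece through `a` of a partition of part of `X` into open pieces (`hcongr`);
-- the pieces of these countably many partitions together cover `X` (`hcover`).
variable {X ι : Type*} [TopologicalSpace X] {V : ι → X → Set X}

theorem exists_mem_sheet_of_mem_closure (hV : ∀ i a, IsOpen (V i a))
    (hcover : ∀ z, ∃ i, z ∈ V i z) (hcongr : ∀ i a z, a ∈ V i z → V i a = V i z)
    {A : Set X} {z : X} (hz : z ∈ closure A) : ∃ i, ∃ a ∈ A, z ∈ V i a := by
  obtain ⟨i, hzi⟩ := hcover z
  obtain ⟨a, haV, haA⟩ := mem_closure_iff.mp hz _ (hV i z) hzi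
  exact ⟨i, a, haA, hcongr i a z haV ▸ hzi⟩

variable [Countable ι]

theorem separableSpace_of_countable_sheets [PreconnectedSpace X] [Nonempty X]
    (hV : ∀ i a, IsOpen (V i a)) (hcover : ∀ z, ∃ i, z ∈ V i z)
    (hcongr : ∀ i a z, a ∈ V i z → V i a = V i z) (hsep : ∀ i a, IsSeparable (V i a)) :
    SeparableSpace X := by
  choose D hDc hVD using hsep
  let grow (A : Set X) : Set X := A ∪ ⋃ a ∈ A, ⋃ i, D i a
  obtain ⟨x₀⟩ := ‹Nonempty X›
  let A : Set X := ⋃ n, grow^[n] {x₀}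
  have hAc : A.Countable := by
    refine countable_iUnion fun n ↦ ?_
    induction n with
    | zero => exact countable_singleton x₀
    | succ n ih =>
      rw [Function.iterate_succ_apply']
      exact ih.union (ih.biUnion fun a _ ↦ countable_iUnion fun i ↦ hDc i a)
  have hopen : IsOpen (closure A) := by
    refine isOpen_iff_mem_nhds.mpr fun z hz ↦ ?_
    obtain ⟨i, a, haA, hza⟩ := exists_mem_sheet_of_mem_closure hV hcover hcongr hz
    obtain ⟨n, han⟩ := mem_iUnion.mp haA
    have hDA : D i a ⊆ A := fun d hd ↦ mem_iUnion.mpr ⟨n + 1, by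
      rw [Function.iterate_succ_apply']
      exact Or.inr (mem_biUnion han (mem_iUnion.mpr ⟨i, hd⟩))⟩
    exact Filter.mem_of_superset ((hV i a).mem_nhds hza) ((hVD i a).trans (closure_mono hDA))
  have hdense : closure A = univ :=
    IsClopen.eq_univ ⟨isClosed_closure, hopen⟩
      ⟨x₀, subset_closure (mem_iUnion.mpr ⟨0, rfl⟩)⟩
  exact ⟨⟨A, hAc, dense_iff_closure_eq.mpr hdense⟩⟩

theorem secondCountableTopology_of_countable_sheets [SeparableSpace X]
    (hV : ∀ i a, IsOpen (V i a)) (hcover : ∀ z, ∃ i, z ∈ V i z)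
    (hcongr : ∀ i a z, a ∈ V i z → V i a = V i z)
    (hsc : ∀ i a, SecondCountableTopology (V i a)) : SecondCountableTopology X := by
  obtain ⟨A, hAc, hAd⟩ := exists_countable_dense X
  have : Countable A := hAc.to_subtype
  refine secondCountableTopology_of_countable_cover (U := fun p : ι × A ↦ V p.1 p.2)
    (fun p ↦ hV p.1 p.2) (eq_univ_of_forall fun z ↦ ?_)
  obtain ⟨i, a, haA, hza⟩ :=
    exists_mem_sheet_of_mem_closure hV hcover hcongr (hAd.closure_eq ▸ mem_univ z)
  exact mem_iUnion.mpr ⟨(i, ⟨a, haA⟩), hza⟩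

end Sheets

theorem IsPreconnected.injOn_of_preimage_homeomorph_prod {E X I : Type*} [TopologicalSpace E]
    [TopologicalSpace X] [TopologicalSpace I] [DiscreteTopology I] {f : E → X} {U : Set X}
    {S : Set E} (hS : IsPreconnected S) (hSU : S ⊆ f ⁻¹' U) (H : f ⁻¹' U ≃ₜ U × I)
    (hH : ∀ z, (H z).1.1 = f z) : InjOn f S := by
  set S' : Set (f ⁻¹' U) := (↑) ⁻¹' S
  have hS' : IsPreconnected S' := by
    rwa [← IsInducing.subtypeVal.isPreconnected_image, Subtype.image_preimage_coe,
      inter_eq_right.mpr hSU]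
  intro z hz w hw hzw
  have hsheet : (H ⟨z, hSU hz⟩).2 = (H ⟨w, hSU hw⟩).2 :=
    hS'.constant (continuous_snd.comp H.continuous).continuousOn
      (show ⟨z, hSU hz⟩ ∈ S' from hz) (show ⟨w, hSU hw⟩ ∈ S' from hw)
  exact congrArg Subtype.val <| H.injective <|
    Prod.ext (Subtype.ext (by simp only [hH, hzw])) hsheet

theorem isPreconnected_pathComponentIn {X : Type*} [TopologicalSpace X] (F : Set X) (x : X) :
    IsPreconnected (pathComponentIn F x) :=
  (pathComponentIn F x).eq_empty_or_nonempty.elim (· ▸ isPreconnected_empty) fun h ↦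
    (isPathConnected_pathComponentIn (pathComponentIn_nonempty_iff.mp h)).isConnected.isPreconnected

theorem IsCoveringMap.exists_mem_isOpen_secondCountableTopology_pathComponentIn {E X : Type*}
    [TopologicalSpace E] [TopologicalSpace X] [LocallyPathConnectedSpace E]
    [SecondCountableTopology X] {f : E → X} (hf : IsCoveringMap f) (x : X) :
    ∃ U, x ∈ U ∧ IsOpen U ∧ ∀ a, SecondCountableTopology (pathComponentIn (f ⁻¹' U) a) := by
  obtain ⟨_, U, hxU, hU, hfU, H, hH⟩ := hf x
  refine ⟨U, hxU, hU, fun a ↦ ?_⟩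
  set S := pathComponentIn (f ⁻¹' U) a
  have hinj : InjOn f S :=
    (isPreconnected_pathComponentIn _ a).injOn_of_preimage_homeomorph_prod
      pathComponentIn_subset H hH
  have hemb : IsOpenEmbedding (S.domRestrict f) :=
    .of_continuous_injective_isOpenMap (hf.continuous.comp continuous_subtype_val) hinj.injective
      (hf.isOpenMap.comp (hfU.pathComponentIn a).isOpenMap_subtype_val)
  exact hemb.isEmbedding.secondCountableTopology

theorem coveringMap_lifts_locPathConnected_and_secondCountable_general
    {E' E : Type u} [TopologicalSpace E'] [TopologicalSpace E]
    [PathConnectedSpace E']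
    (P : E' → E) (hP : IsCoveringMap P)
    [LocallyPathConnectedSpace E] [SecondCountableTopology E] :
    LocallyPathConnectedSpace E' ∧ SecondCountableTopology E' := by
  have : LocallyPathConnectedSpace E' := hP.isLocalHomeomorph.locallyPathConnectedSpace
  refine ⟨this, ?_⟩
  choose U hxU hU hsc using hP.exists_mem_isOpen_secondCountableTopology_pathComponentIn
  obtain ⟨T, hTc, hTU⟩ :=
    TopologicalSpace.countable_cover_nhds fun x ↦ (hU x).mem_nhds (hxU x)
  have : Countable T := hTc.to_subtype
  let V (x : T) (a : E') : Set E' := pathComponentIn (P ⁻¹' U x) a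
  have hV : ∀ x a, IsOpen (V x a) := fun x a ↦
    ((hU x).preimage hP.continuous).pathComponentIn a
  have hcover : ∀ z, ∃ x, z ∈ V x z := fun z ↦ by
    obtain ⟨x, hxT, hz⟩ := mem_iUnion₂.mp (hTU ▸ mem_univ (P z))
    exact ⟨⟨x, hxT⟩, mem_pathComponentIn_self hz⟩
  have hcongr : ∀ x a z, a ∈ V x z → V x a = V x z := fun _ _ _ ↦ pathComponentIn_congr
  have : SeparableSpace E' :=
    separableSpace_of_countable_sheets hV hcover hcongr fun x a ↦ .of_subtype (V x a)
  exact secondCountableTopology_of_countable_sheets hV hcover hcongr fun x a ↦ hsc x a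

/-- **Proposition 5(d).**
Let `P : E' → E` be a covering projection between path connected spaces.  If `E` is locally
path connected and second countable, then `E'` is locally path connected and second
countable. -/
theorem coveringMap_lifts_locPathConnected_and_secondCountable
    {E' E : Type u} [TopologicalSpace E'] [TopologicalSpace E]
    [PathConnectedSpace E'] [PathConnectedSpace E]
    (P : E' → E) (hP : IsCoveringMap P)
    [LocallyPathConnectedSpace E] [SecondCountableTopology E] :
    LocallyPathConnectedSpace E' ∧ SecondCountableTopology E' :=
  coveringMap_lifts_locPathConnected_and_secondCountable_general P hP
end

section
/- Let P_X : X' → X and P_Y : Y' → Y be universal covering projections between Hausdorff, connected, locally path connected spaces. If X is homotopy equivalent to Y, then X' is homotopy equivalent to Y'. Moreover, any lifting f' : X' → Y' (with respect to P_Y) of f ∘ P_X, where f : X → Y is a homotopy equivalence, is itself a homotopy equivalence. -/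
/-- A continuous map is a homotopy equivalence if it admits a continuous map in the other
direction such that both composites are homotopic to the identity. -/
def IsHomotopyEquivMap {X : Type u} {Y : Type v} [TopologicalSpace X] [TopologicalSpace Y]
    (f : C(X, Y)) : Prop :=
  ∃ g : C(Y, X), (g.comp f).Homotopic (ContinuousMap.id X) ∧
    (f.comp g).Homotopic (ContinuousMap.id Y)

/-!
Let `g` be a homotopy inverse of `f` and `g'` a lift of `g ∘ P_Y`. The composite `g' ∘ f'` lies
over `g ∘ f ∘ P_X ≃ P_X`, so lifting that homotopy deforms `g' ∘ f'` into a deck transformation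
of the universal cover `X'`, which is a homeomorphism. Hence `g' ∘ f'`, and symmetrically
`f' ∘ g'`, are homotopy equivalences, and therefore so is `f'`. Lifts exist because covering maps
onto connected spaces are surjective and `X'`, `Y'` are simply connected.
-/

open ContinuousMap

section HomotopyEquivMap

variable {X Y : Type*} [TopologicalSpace X] [TopologicalSpace Y]

theorem ContinuousMap.HomotopyEquiv.isHomotopyEquivMap (e : HomotopyEquiv X Y) :
    IsHomotopyEquivMap e.toFun :=
  ⟨e.invFun, e.left_inv, e.right_inv⟩

theorem IsHomotopyEquivMap.nonempty_homotopyEquiv {f : C(X, Y)} (hf : IsHomotopyEquivMap f) :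
    Nonempty (HomotopyEquiv X Y) :=
  let ⟨g, hgf, hfg⟩ := hf
  ⟨⟨f, g, hgf, hfg⟩⟩

theorem isHomotopyEquivMap_of_homotopic_leftInverse_rightInverse {f : C(X, Y)} {l r : C(Y, X)}
    (hl : (l.comp f).Homotopic (.id X)) (hr : (f.comp r).Homotopic (.id Y)) :
    IsHomotopyEquivMap f := by
  have hlfr : (l.comp (f.comp r)).Homotopic r := by
    simpa [comp_assoc] using hl.comp (.refl r)
  have hrl : r.Homotopic l :=
    hlfr.symm.trans (by simpa using (Homotopic.refl l).comp hr)
  exact ⟨r, (hrl.comp (.refl f)).trans hl, hr⟩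

theorem IsHomotopyEquivMap.of_comp_of_comp {f : C(X, Y)} {g : C(Y, X)}
    (hgf : IsHomotopyEquivMap (g.comp f)) (hfg : IsHomotopyEquivMap (f.comp g)) :
    IsHomotopyEquivMap f := by
  obtain ⟨a, ha, -⟩ := hgf
  obtain ⟨b, -, hb⟩ := hfg
  exact isHomotopyEquivMap_of_homotopic_leftInverse_rightInverse (l := a.comp g) (r := g.comp b)
    (by rwa [comp_assoc]) (by rwa [← comp_assoc])

end HomotopyEquivMap

namespace IsCoveringMap

variable {E X A : Type*} [TopologicalSpace E] [TopologicalSpace X] [TopologicalSpace A]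
  {p : E → X}

theorem isClosed_range (hp : IsCoveringMap p) : IsClosed (Set.range p) := by
  refine isOpen_compl_iff.mp <| isOpen_iff_mem_nhds.mpr fun x hx => ?_
  obtain ⟨-, U, hxU, hU, -, H, hH⟩ := hp x
  refine Filter.mem_of_superset (hU.mem_nhds hxU) ?_
  rintro _ hyU ⟨e, rfl⟩
  -- any point over `U` gives a sheet, and the sheet meets the fibre over `x`
  exact hx ⟨H.symm (⟨x, hxU⟩, (H ⟨e, hyU⟩).2), by simpa using (hH (H.symm (⟨x, hxU⟩, _))).symm⟩

theorem surjective [PreconnectedSpace X] [Nonempty E] (hp : IsCoveringMap p) :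
    Function.Surjective p :=
  Set.range_eq_univ.mp <|
    IsClopen.eq_univ ⟨hp.isClosed_range, hp.isOpenMap.isOpen_range⟩ (Set.range_nonempty p)

theorem exists_lift [PreconnectedSpace X] [Nonempty E] [SimplyConnectedSpace A]
    [LocallyPathConnectedSpace A] (hp : IsCoveringMap p) (f : C(A, X)) :
    ∃ F : C(A, E), p ∘ F = f := by
  obtain ⟨a₀⟩ : Nonempty A := inferInstance
  obtain ⟨e₀, he₀⟩ := hp.surjective (f a₀)
  obtain ⟨F, ⟨-, hF⟩, -⟩ := hp.existsUnique_continuousMap_lifts f a₀ e₀ he₀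
  exact ⟨F, hF⟩

theorem exists_homotopic_lift_of_homotopic_comp (hp : IsCoveringMap p) {φ : C(A, E)}
    {f : C(A, X)} (h : (ContinuousMap.comp ⟨p, hp.continuous⟩ φ).Homotopic f) :
    ∃ ψ : C(A, E), φ.Homotopic ψ ∧ p ∘ ψ = f := by
  obtain ⟨H⟩ := h
  have H₀ (a : A) : H (0, a) = p (φ a) := H.apply_zero a
  let Λ := hp.liftHomotopy H.toContinuousMap φ H₀
  refine ⟨Λ.curry 1, ⟨⟨Λ, hp.liftHomotopy_zero _ _ H₀, fun _ => rfl⟩⟩, funext fun a => ?_⟩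
  exact (congr_fun (hp.liftHomotopy_lifts _ _ H₀) (1, a)).trans (H.apply_one a)

variable [SimplyConnectedSpace E] [LocallyPathConnectedSpace E]

theorem exists_inverse_of_comp_eq_self (hp : IsCoveringMap p) (φ : C(E, E)) (hφ : p ∘ φ = p) :
    ∃ ψ : C(E, E), ψ.comp φ = .id E ∧ φ.comp ψ = .id E := by
  obtain ⟨e₀⟩ : Nonempty E := inferInstance
  obtain ⟨ψ, ⟨hψe₀, hψ⟩, -⟩ := hp.existsUnique_continuousMap_lifts ⟨p, hp.continuous⟩ (φ e₀) e₀
    (congr_fun hφ e₀).symm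
  have hψ' : p ∘ ψ = p := hψ
  refine ⟨ψ, ?_, ?_⟩
  · refine DFunLike.coe_injective <| hp.eq_of_comp_eq (ψ.comp φ).continuous continuous_id ?_ e₀
      hψe₀
    rw [coe_comp, ← Function.comp_assoc, hψ', hφ, coe_id, Function.comp_id]
  · refine DFunLike.coe_injective <| hp.eq_of_comp_eq (φ.comp ψ).continuous continuous_id ?_
      (φ e₀) (by simp [hψe₀])
    rw [coe_comp, ← Function.comp_assoc, hφ, hψ', coe_id, Function.comp_id]

theorem isHomotopyEquivMap_of_lifts_homotopic_id (hp : IsCoveringMap p) {k : C(X, X)}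
    (hk : k.Homotopic (.id X)) {u : C(E, E)} (hu : ∀ e, p (u e) = k (p e)) :
    IsHomotopyEquivMap u := by
  let P : C(E, X) := ⟨p, hp.continuous⟩
  have hPu : (P.comp u).Homotopic P := by
    simpa [show P.comp u = k.comp P from ext hu] using hk.comp (.refl P)
  obtain ⟨φ, huφ, hφ⟩ := hp.exists_homotopic_lift_of_homotopic_comp hPu
  obtain ⟨ψ, hψφ, hφψ⟩ := hp.exists_inverse_of_comp_eq_self φ hφ
  exact ⟨ψ, by simpa [hψφ] using (Homotopic.refl ψ).comp huφ,
    by simpa [hφψ] using huφ.comp (.refl ψ)⟩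

end IsCoveringMap

theorem IsHomotopyEquivMap.isHomotopyEquivMap_of_lift {E X F Y : Type*} [TopologicalSpace E]
    [TopologicalSpace X] [TopologicalSpace F] [TopologicalSpace Y] [PreconnectedSpace X]
    [SimplyConnectedSpace E] [LocallyPathConnectedSpace E]
    [SimplyConnectedSpace F] [LocallyPathConnectedSpace F]
    {p : E → X} (hp : IsCoveringMap p) {q : F → Y} (hq : IsCoveringMap q)
    {f : C(X, Y)} (hf : IsHomotopyEquivMap f) {f' : C(E, F)} (hf' : ∀ e, q (f' e) = f (p e)) :
    IsHomotopyEquivMap f' := by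
  obtain ⟨g, hgf, hfg⟩ := hf
  obtain ⟨g', hg'⟩ := hp.exists_lift (g.comp ⟨q, hq.continuous⟩)
  have hg'' (y : F) : p (g' y) = g (q y) := congr_fun hg' y
  refine .of_comp_of_comp (g := g') ?_ ?_
  · exact hp.isHomotopyEquivMap_of_lifts_homotopic_id hgf fun e => by simp [hg'', hf']
  · exact hq.isHomotopyEquivMap_of_lifts_homotopic_id hfg fun y => by simp [hg'', hf']

theorem univCovering_homotopyEquiv_of_homotopyEquiv_general
    {X' X : Type u} {Y' Y : Type v}
    [TopologicalSpace X'] [TopologicalSpace X] [TopologicalSpace Y'] [TopologicalSpace Y]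
    [ConnectedSpace X] [ConnectedSpace Y]
    [LocallyPathConnectedSpace X']
    [LocallyPathConnectedSpace Y']
    (P_X : X' → X) (hPX : IsCoveringMap P_X) [SimplyConnectedSpace X']
    (P_Y : Y' → Y) (hPY : IsCoveringMap P_Y) [SimplyConnectedSpace Y']
    (hXY : Nonempty (ContinuousMap.HomotopyEquiv X Y)) :
    Nonempty (ContinuousMap.HomotopyEquiv X' Y') ∧
      ∀ f : C(X, Y), IsHomotopyEquivMap f →
        ∀ f' : C(X', Y'), (∀ x' : X', P_Y (f' x') = f (P_X x')) →
          IsHomotopyEquivMap f' := by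
  refine ⟨?_, fun f hf f' hf' => hf.isHomotopyEquivMap_of_lift hPX hPY hf'⟩
  obtain ⟨e⟩ := hXY
  obtain ⟨f', hf'⟩ := hPY.exists_lift (e.toFun.comp ⟨P_X, hPX.continuous⟩)
  exact IsHomotopyEquivMap.nonempty_homotopyEquiv <|
    e.isHomotopyEquivMap.isHomotopyEquivMap_of_lift hPX hPY (congr_fun hf')

/-- **Lemma 6 (Cacciatori–Pigola).**
Let `P_X : X' → X` and `P_Y : Y' → Y` be universal covering projections between Hausdorff,
connected, locally path connected spaces.  If `X` is homotopy equivalent to `Y`, then `X'`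
is homotopy equivalent to `Y'`; moreover, any lifting `f' : X' → Y'` (with respect to `P_Y`)
of `f ∘ P_X`, where `f : X → Y` is a homotopy equivalence, is itself a homotopy
equivalence. -/
theorem univCovering_homotopyEquiv_of_homotopyEquiv
    {X' X : Type u} {Y' Y : Type v}
    [TopologicalSpace X'] [TopologicalSpace X] [TopologicalSpace Y'] [TopologicalSpace Y]
    [T2Space X'] [T2Space X] [T2Space Y'] [T2Space Y]
    [ConnectedSpace X'] [ConnectedSpace X] [ConnectedSpace Y'] [ConnectedSpace Y]
    [LocallyPathConnectedSpace X'] [LocallyPathConnectedSpace X]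
    [LocallyPathConnectedSpace Y'] [LocallyPathConnectedSpace Y]
    (P_X : X' → X) (hPX : IsCoveringMap P_X) [SimplyConnectedSpace X']
    (P_Y : Y' → Y) (hPY : IsCoveringMap P_Y) [SimplyConnectedSpace Y']
    (hXY : Nonempty (ContinuousMap.HomotopyEquiv X Y)) :
    Nonempty (ContinuousMap.HomotopyEquiv X' Y') ∧
      ∀ f : C(X, Y), IsHomotopyEquivMap f →
        ∀ f' : C(X', Y'), (∀ x' : X', P_Y (f' x') = f (P_X x')) →
          IsHomotopyEquivMap f' :=
  univCovering_homotopyEquiv_of_homotopyEquiv_general P_X hPX P_Y hPY hXY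
end

section
/- Let π : E → B be a Hurewicz fibration between connected, locally path connected, semi-locally simply connected spaces with the homotopy type of a CW-complex, and let P_E : E' → E and P_B : B' → B be the universal covering projections. Then there exists a Hurewicz fibration π' : E' → B' such that P_B ∘ π' = π ∘ P_E. -/
/-!
Since `E'` is simply connected and locally path connected, `π ∘ P_E` lifts through the
covering `P_B` to a map `π'`. Covering maps are Hurewicz fibrations and fibrations compose, so
`P_B ∘ π' = π ∘ P_E` is one. Given a homotopy `H` into `B'`, lift `P_B ∘ H` through it; the
image of that lift under `π'` and `H` both lift `P_B ∘ H` through `P_B` with the same initial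
values, so they agree by uniqueness of path lifting.
-/

open Topology Metric unitInterval Set

universe u v w

/-- A continuous map is a *Hurewicz fibration* if it has the homotopy lifting property
with respect to all topological spaces. -/
def IsHurewiczFibration {E : Type u} {B : Type v} [TopologicalSpace E] [TopologicalSpace B]
    (π : E → B) : Prop :=
  Continuous π ∧
    ∀ (X : Type w) [TopologicalSpace X] (H : C(X × I, B)) (h₀ : C(X, E)),
      (∀ x : X, π (h₀ x) = H (x, 0)) →
        ∃ H' : C(X × I, E), (∀ x : X, H' (x, 0) = h₀ x) ∧ ∀ z : X × I, π (H' z) = H z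

/-- Lebesgue covering dimension at most `n`: every open cover admits an open refinement
in which every point lies in at most `n + 1` members. -/
def CovDimLE (X : Type u) [TopologicalSpace X] (n : ℕ) : Prop :=
  ∀ 𝒰 : Set (Set X), (∀ U ∈ 𝒰, IsOpen U) → ⋃₀ 𝒰 = univ →
    ∃ 𝒱 : Set (Set X), (∀ V ∈ 𝒱, IsOpen V) ∧ ⋃₀ 𝒱 = univ ∧
      (∀ V ∈ 𝒱, ∃ U ∈ 𝒰, V ⊆ U) ∧
      ∀ x : X, {V | V ∈ 𝒱 ∧ x ∈ V}.Finite ∧ {V | V ∈ 𝒱 ∧ x ∈ V}.ncard ≤ n + 1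

/-- `X` has finite Lebesgue covering dimension. -/
def FiniteCovDim (X : Type u) [TopologicalSpace X] : Prop := ∃ n, CovDimLE X n

/-- `X` is semi-locally simply connected: every point has a neighbourhood `U` such that
every loop in `U` is null-homotopic in `X`. -/
def SemiLocallySimplyConnected (X : Type u) [TopologicalSpace X] : Prop :=
  ∀ x : X, ∃ U ∈ 𝓝 x, ∀ γ : Path x x, range γ ⊆ U → γ.Homotopic (Path.refl x)

/-- `X` is locally contractible: every point has arbitrarily small open neighbourhoods
whose inclusion into `X` is null-homotopic (i.e. they are contractible in `X`). -/
def LocallyContractible (X : Type u) [TopologicalSpace X] : Prop :=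
  ∀ (x : X), ∀ U ∈ 𝓝 x, ∃ V : Set X, V ∈ 𝓝 x ∧ V ⊆ U ∧ IsOpen V ∧
    ∃ c : X, Nonempty
      (ContinuousMap.Homotopy (⟨Subtype.val, continuous_subtype_val⟩ : C(V, X))
        (ContinuousMap.const V c))

/-- `X` is aspherical: it admits a universal covering (a covering by a simply connected
space) which is contractible. -/
def IsAspherical (X : Type u) [TopologicalSpace X] : Prop :=
  ∃ (X' : Type u) (_ : TopologicalSpace X') (P : X' → X),
    IsCoveringMap P ∧ SimplyConnectedSpace X' ∧ ContractibleSpace X'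

section HurewiczFibration

universe w'

variable {E : Type u} {B : Type v} [TopologicalSpace E] [TopologicalSpace B]

/-- `Λ` is Hurewicz's lifting function; its domain `{q // q.2 0 = π q.1}` is `E ×_B B^I`. -/
theorem IsHurewiczFibration.exists_liftingFunction {π : E → B}
    (hπ : IsHurewiczFibration.{u, v, max u v w} π) :
    ∃ Λ : C({q : E × C(I, B) // q.2 0 = π q.1} × I, E),
      (∀ q, Λ (q, 0) = q.1.1) ∧ ∀ q t, π (Λ (q, t)) = q.1.2 t := by
  let ψ := Homeomorph.ulift.{w} (X := {q : E × C(I, B) // q.2 0 = π q.1})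
  obtain ⟨Λ, hΛ0, hΛπ⟩ := hπ.2 (ULift.{w} {q : E × C(I, B) // q.2 0 = π q.1})
    ⟨fun z => (ψ z.1).1.2 z.2, by fun_prop⟩ ⟨fun q => (ψ q).1.1, by fun_prop⟩
    fun q => (ψ q).2.symm
  exact ⟨Λ.comp ((ψ.symm : C(_, _)).prodMap (.id I)), fun q => hΛ0 (ψ.symm q),
    fun q t => hΛπ (ψ.symm q, t)⟩

theorem IsHurewiczFibration.of_liftingFunction {π : E → B} (hπ : Continuous π)
    (Λ : C({q : E × C(I, B) // q.2 0 = π q.1} × I, E))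
    (hΛ0 : ∀ q, Λ (q, 0) = q.1.1) (hΛπ : ∀ q t, π (Λ (q, t)) = q.1.2 t) :
    IsHurewiczFibration.{u, v, w} π := by
  refine ⟨hπ, fun X _ H h₀ h => ?_⟩
  let φ : C(X, {q : E × C(I, B) // q.2 0 = π q.1}) :=
    ⟨fun x => ⟨(h₀ x, H.curry x), (h x).symm⟩, by fun_prop⟩
  exact ⟨Λ.comp (φ.prodMap (.id I)), fun x => hΛ0 (φ x), fun z => hΛπ (φ z.1) z.2⟩

theorem IsHurewiczFibration.lift_universe {π : E → B}
    (hπ : IsHurewiczFibration.{u, v, max u v w} π) : IsHurewiczFibration.{u, v, w'} π :=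
  have ⟨Λ, hΛ0, hΛπ⟩ := hπ.exists_liftingFunction
  .of_liftingFunction hπ.1 Λ hΛ0 hΛπ

theorem IsHurewiczFibration.comp {C : Type w'} [TopologicalSpace C] {f : E → B} {g : B → C}
    (hg : IsHurewiczFibration.{v, w', w} g) (hf : IsHurewiczFibration.{u, v, w} f) :
    IsHurewiczFibration.{u, w', w} (g ∘ f) := by
  refine ⟨hg.1.comp hf.1, fun X _ H h₀ h => ?_⟩
  obtain ⟨G, hG0, hGg⟩ := hg.2 X H ⟨f ∘ h₀, hf.1.comp h₀.2⟩ h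
  obtain ⟨F, hF0, hFf⟩ := hf.2 X G h₀ fun x => (hG0 x).symm
  exact ⟨F, hF0, fun z => by simp only [Function.comp_apply, hFf, hGg]⟩

theorem IsCoveringMap.isHurewiczFibration {p : E → B} (hp : IsCoveringMap p) :
    IsHurewiczFibration.{u, v, w} p := by
  refine ⟨hp.continuous, fun X _ H h₀ h => ?_⟩
  have H_0 : ∀ x, H.comp .prodSwap (0, x) = p (h₀ x) := fun x => (h x).symm
  exact ⟨(hp.liftHomotopy _ _ H_0).comp .prodSwap, hp.liftHomotopy_zero _ _ H_0,
    fun z => congrFun (hp.liftHomotopy_lifts _ _ H_0) z.swap⟩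

theorem IsHurewiczFibration.of_isCoveringMap_comp {C : Type w'} [TopologicalSpace C]
    {f : E → B} {p : B → C} (hp : IsCoveringMap p) (hf : Continuous f)
    (hpf : IsHurewiczFibration.{u, w', w} (p ∘ f)) : IsHurewiczFibration.{u, v, w} f := by
  refine ⟨hf, fun X _ H h₀ h => ?_⟩
  obtain ⟨F, hF0, hFpf⟩ := hpf.2 X ((⟨p, hp.continuous⟩ : C(B, C)).comp H) h₀
    fun x => by simp [h x]
  refine ⟨F, hF0, fun ⟨x, t⟩ => congrFun (?_ : (fun s => f (F (x, s))) = (H ⟨x, ·⟩)) t⟩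
  -- both paths lift `s ↦ p (H (x, s))` through `p` and start at `H (x, 0)`
  exact hp.eq_of_comp_eq (by fun_prop) (by fun_prop) (funext fun s => hFpf (x, s)) 0
    (by simp [hF0, h])

end HurewiczFibration

section Covering

variable {E : Type u} {X : Type v} [TopologicalSpace E] [TopologicalSpace X]

theorem IsCoveringMap.surjective_s15 {p : E → X} (hp : IsCoveringMap p) [PreconnectedSpace X]
    [Nonempty E] : Function.Surjective p := by
  have hclosed : IsClosed (range p) := by
    refine isOpen_compl_iff.mp (isOpen_iff_mem_nhds.mpr fun x hx => ?_)
    obtain ⟨-, U, hxU, hU, -, Φ, -⟩ := hp x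
    refine Filter.mem_of_superset (hU.mem_nhds hxU) ?_
    rintro x' hx' ⟨e, rfl⟩
    exact hx ⟨_, (Φ ⟨e, hx'⟩).2.2⟩
  exact range_eq_univ.mp <| (IsClopen.eq_univ ⟨hclosed, hp.isOpenMap.isOpen_range⟩
    (range_nonempty p))

theorem IsLocalHomeomorph.locallyPathConnectedSpace_s15 {p : E → X} (hp : IsLocalHomeomorph p)
    [LocallyPathConnectedSpace X] : LocallyPathConnectedSpace E := by
  refine locallyPathConnectedSpace_iff_pathComponentIn_mem_nhds.mpr fun x u hu hxu => ?_
  obtain ⟨e, hxe, rfl⟩ := hp x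
  set V := e '' (u ∩ e.source)
  set W := pathComponentIn V (e x)
  have hV : V ∈ 𝓝 (e x) :=
    e.image_mem_nhds hxe (Filter.inter_mem (hu.mem_nhds hxu) (e.open_source.mem_nhds hxe))
  have hW : W ∈ 𝓝 (e x) := pathComponentIn_mem_nhds hV
  have hWt : W ⊆ e.target :=
    pathComponentIn_subset.trans (e.image_source_eq_target ▸ image_mono inter_subset_right)
  have hS : e.symm '' W ∈ 𝓝 x := by
    simpa only [e.left_inv hxe] using e.symm.image_mem_nhds (e.map_source hxe) hW
  have hSu : e.symm '' W ⊆ u := by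
    rintro - ⟨z, hz, rfl⟩
    obtain ⟨y, hy, rfl⟩ := pathComponentIn_subset hz
    rw [e.left_inv hy.2]
    exact hy.1
  have hSconn : IsPathConnected (e.symm '' W) :=
    (isPathConnected_pathComponentIn (mem_of_mem_nhds hV)).image' (e.continuousOn_symm.mono hWt)
  exact Filter.mem_of_superset hS (hSconn.subset_pathComponentIn (mem_of_mem_nhds hS) hSu)

end Covering

theorem hurewicz_fibration_lifts_to_univCoverings_general
    {E B : Type} [TopologicalSpace E] [TopologicalSpace B]
    [ConnectedSpace B]
    [LocallyPathConnectedSpace E]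
    (π : E → B) (hπ : IsHurewiczFibration π)
    {E' B' : Type} [TopologicalSpace E'] [TopologicalSpace B']
    (P_E : E' → E) (hPE : IsCoveringMap P_E) [SimplyConnectedSpace E']
    (P_B : B' → B) (hPB : IsCoveringMap P_B) [SimplyConnectedSpace B'] :
    ∃ π' : E' → B', IsHurewiczFibration π' ∧ P_B ∘ π' = π ∘ P_E := by
  have : LocallyPathConnectedSpace E' := hPE.isLocalHomeomorph.locallyPathConnectedSpace_s15
  let a₀ : E' := Classical.arbitrary E'
  obtain ⟨b₀, hb₀⟩ := hPB.surjective_s15 (π (P_E a₀))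
  obtain ⟨π', -, hπ'⟩ := (hPB.existsUnique_continuousMap_lifts
    ⟨π ∘ P_E, hπ.1.comp hPE.continuous⟩ a₀ b₀ hb₀).exists
  refine ⟨π', .of_isCoveringMap_comp hPB π'.continuous ?_, hπ'⟩
  rw [hπ']
  exact hπ.lift_universe.comp hPE.isHurewiczFibration

/-- **Proposition 8(a) (Cacciatori–Pigola).**
Let `π : E → B` be a Hurewicz fibration between connected, locally path connected,
semi-locally simply connected spaces with the homotopy type of a CW-complex, and let
`P_E : E' → E` and `P_B : B' → B` be the universal covering projections.  Then there is a
Hurewicz fibration `π' : E' → B'` with `P_B ∘ π' = π ∘ P_E`. -/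
theorem hurewicz_fibration_lifts_to_univCoverings
    {E B : Type} [TopologicalSpace E] [TopologicalSpace B]
    [ConnectedSpace E] [ConnectedSpace B]
    [LocallyPathConnectedSpace E] [LocallyPathConnectedSpace B]
    (hE_slsc : SemiLocallySimplyConnected E) (hB_slsc : SemiLocallySimplyConnected B)
    (hE_cw : HasCWHomotopyType E) (hB_cw : HasCWHomotopyType B)
    (π : E → B) (hπ : IsHurewiczFibration π)
    {E' B' : Type} [TopologicalSpace E'] [TopologicalSpace B']
    (P_E : E' → E) (hPE : IsCoveringMap P_E) [SimplyConnectedSpace E']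
    (P_B : B' → B) (hPB : IsCoveringMap P_B) [SimplyConnectedSpace B'] :
    ∃ π' : E' → B', IsHurewiczFibration π' ∧ P_B ∘ π' = π ∘ P_E :=
  hurewicz_fibration_lifts_to_univCoverings_general π hπ P_E hPE P_B hPB
end
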